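/- arXiv:1009.0454 — 4 statements merged into one kernel-verified Lean document; each statement's English description precedes it below -/
import Mathlib

section
/- Let n be a natural number. For any two surjective group homomorphisms φ, ψ : F_n →* ℤ × ℤ there exists an automorphism α of F_n with ψ ∘ α = φ. (This is the case of the main theorem for the torus, whose fundamental group is ℤ × ℤ.) -/
/-!
Precomposing a homomorphism `FreeGroup ι →* G` with the elementary Nielsen automorphisms
(permuting the generators, inverting one, multiplying one by a power of another) acts on the
tuple of images of the generators by the corresponding column operations. For `G = ℤ × ℤ`,
Euclid's algorithm on the first coordinates and then on the second coordinates of the remaining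
generators brings any tuple into the triangular form `((a, b), (0, c), 0, …, 0)`; surjectivity
forces `a, c = ±1`, and two more moves reach `((1, 0), (0, 1), 0, …, 0)`. Any two epimorphisms
are therefore related through this normal form.
-/

open FreeGroup Function Set

variable {ι G : Type*} [Group G]

def NielsenEquiv (v w : ι → G) : Prop :=
  ∃ α : FreeGroup ι ≃* FreeGroup ι, (lift v).comp α.toMonoidHom = lift w

namespace NielsenEquiv

variable {u v w : ι → G}

theorem refl (v : ι → G) : NielsenEquiv v v := ⟨MulEquiv.refl _, rfl⟩

theorem symm : NielsenEquiv v w → NielsenEquiv w v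
  | ⟨α, hα⟩ => ⟨α.symm, by rw [← hα]; ext; simp⟩

theorem trans : NielsenEquiv u v → NielsenEquiv v w → NielsenEquiv u w
  | ⟨α, hα⟩, ⟨β, hβ⟩ => ⟨β.trans α, by rw [← hβ, ← hα]; ext; simp⟩

theorem surjective_lift (h : NielsenEquiv v w) (hv : Surjective (lift v)) :
    Surjective (lift w) := by
  obtain ⟨α, hα⟩ := h
  rw [← hα, MonoidHom.coe_comp]
  exact hv.comp α.surjective

theorem of_lift_inverse {e e' : ι → FreeGroup ι} (he : ∀ i, lift e (e' i) = of i)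
    (he' : ∀ i, lift e' (e i) = of i) (v : ι → G) : NielsenEquiv v (fun i ↦ lift v (e i)) :=
  ⟨(lift e).toMulEquiv (lift e') (ext_hom _ _ fun i ↦ by simpa using he' i)
    (ext_hom _ _ fun i ↦ by simpa using he i), ext_hom _ _ fun i ↦ by simp⟩

theorem comp_perm (v : ι → G) (σ : Equiv.Perm ι) : NielsenEquiv v (v ∘ σ) := by
  convert of_lift_inverse (e := of ∘ σ) (e' := of ∘ σ.symm) (by simp) (by simp) v using 1
  simp [comp_def]

variable [DecidableEq ι]

theorem update_inv (v : ι → G) (i : ι) : NielsenEquiv v (update v i (v i)⁻¹) := by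
  have he : ∀ k, lift (update of i (of i)⁻¹) (update of i (of i)⁻¹ k) = of k := by
    intro k; by_cases hk : k = i <;> simp [hk]
  convert of_lift_inverse he he v using 1
  funext k; by_cases hk : k = i <;> simp [hk]

theorem update_zpow_units (v : ι → G) (i : ι) (u : ℤˣ) :
    NielsenEquiv v (update v i (v i ^ (u : ℤ))) := by
  rcases Int.units_eq_one_or u with rfl | rfl
  · simpa using refl v
  · simpa using update_inv v i

theorem update_mul_zpow (v : ι → G) {i j : ι} (hij : i ≠ j) (m : ℤ) :
    NielsenEquiv v (update v i (v i * v j ^ m)) := by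
  have he : ∀ m : ℤ, ∀ k,
      lift (update of i (of i * of j ^ m)) (update of i (of i * of j ^ (-m)) k) = of k := by
    intro m k; by_cases hk : k = i <;> simp [hk, hij.symm]
  convert of_lift_inverse (he m) (by simpa using he (-m)) v using 1
  funext k; by_cases hk : k = i <;> simp [hk]

end NielsenEquiv

theorem isUnit_toAdd_of_surjective_lift {v : ι → G} (hv : Surjective (lift v))
    {f : G →* Multiplicative ℤ} (hf : Surjective f) {i₀ : ι} (h : ∀ i ≠ i₀, f (v i) = 1) :
    IsUnit (f (v i₀)).toAdd := by
  have hcomp : f.comp (lift v) = lift (f ∘ v) := ext_hom _ _ fun i ↦ by simp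
  have hrange : (lift (f ∘ v)).range ≤ Subgroup.zpowers (f (v i₀)) := by
    rw [range_lift_eq_closure, Subgroup.closure_le]
    rintro _ ⟨i, rfl⟩
    rcases eq_or_ne i i₀ with rfl | hi
    · exact Subgroup.mem_zpowers _
    · simp [h i hi]
  have hsurj : Surjective (lift (f ∘ v)) := by
    rw [← hcomp, MonoidHom.coe_comp]
    exact hf.comp hv
  obtain ⟨k, hk⟩ := Subgroup.mem_zpowers_iff.mp (hrange (hsurj (.ofAdd 1)))
  exact .of_mul_eq_one_right k (by simpa using congrArg Multiplicative.toAdd hk)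

/-- `mapsTo` lets a second Euclid pass on a subset of the generators preserve what the first
pass achieved there. -/
structure NielsenEquivOn (S : Set ι) (v w : ι → G) : Prop where
  nielsenEquiv : NielsenEquiv v w
  eqOn : EqOn v w Sᶜ
  mapsTo : ∀ H : Subgroup G, MapsTo v S H → MapsTo w S H

namespace NielsenEquivOn

variable {S : Set ι} {u v w : ι → G}

theorem refl (v : ι → G) : NielsenEquivOn S v v := ⟨.refl v, eqOn_refl _ _, fun _ h ↦ h⟩

theorem trans (h₁ : NielsenEquivOn S u v) (h₂ : NielsenEquivOn S v w) : NielsenEquivOn S u w :=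
  ⟨h₁.nielsenEquiv.trans h₂.nielsenEquiv, h₁.eqOn.trans h₂.eqOn,
    fun H hu ↦ h₂.mapsTo H (h₁.mapsTo H hu)⟩

variable [DecidableEq ι] {i j : ι}

theorem comp_swap (v : ι → G) (hi : i ∈ S) (hj : j ∈ S) :
    NielsenEquivOn S v (v ∘ Equiv.swap i j) := by
  refine ⟨.comp_perm v _, fun k hk ↦ ?_, fun H hv k hk ↦ hv ?_⟩
  · have hki : k ≠ i := fun h ↦ hk (h ▸ hi)
    have hkj : k ≠ j := fun h ↦ hk (h ▸ hj)
    simp [Equiv.swap_apply_of_ne_of_ne hki hkj]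
  · rcases eq_or_ne k i with rfl | hki
    · simpa using hj
    rcases eq_or_ne k j with rfl | hkj
    · simpa using hi
    simpa [Equiv.swap_apply_of_ne_of_ne hki hkj] using hk

theorem update_mul_zpow (v : ι → G) (hi : i ∈ S) (hj : j ∈ S) (hij : i ≠ j) (m : ℤ) :
    NielsenEquivOn S v (update v i (v i * v j ^ m)) := by
  refine ⟨.update_mul_zpow v hij m, fun k hk ↦ ?_, fun H hv k hk ↦ ?_⟩
  · have hki : k ≠ i := fun h ↦ hk (h ▸ hi)
    simp [hki]
  · rcases eq_or_ne k i with rfl | hki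
    · simpa using H.mul_mem (hv hk) (H.zpow_mem (hv hj) m)
    · simpa [hki] using hv hk

end NielsenEquivOn

theorem Int.exists_natAbs_add_mul_lt {a b : ℤ} (hb : b ≠ 0) (hba : b.natAbs ≤ a.natAbs) :
    ∃ m : ℤ, (a + m * b).natAbs < a.natAbs := by
  by_cases h : (a + b).natAbs < a.natAbs
  · exact ⟨1, by simpa using h⟩
  · exact ⟨-1, by omega⟩

section Euclid

variable [DecidableEq ι] (f : G →* Multiplicative ℤ)

theorem exists_nielsenEquivOn_sum_natAbs_lt {S : Finset ι} {v : ι → G} {i j : ι}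
    (hi : i ∈ S) (hj : j ∈ S) (hij : i ≠ j) (hvi : f (v i) ≠ 1) (hvj : f (v j) ≠ 1) :
    ∃ w, NielsenEquivOn S v w ∧
      ∑ k ∈ S, (f (w k)).toAdd.natAbs < ∑ k ∈ S, (f (v k)).toAdd.natAbs := by
  wlog hle : (f (v j)).toAdd.natAbs ≤ (f (v i)).toAdd.natAbs generalizing i j
  · exact this hj hi hij.symm hvj hvi (by omega)
  obtain ⟨m, hm⟩ := Int.exists_natAbs_add_mul_lt (toAdd_eq_zero.not.mpr hvj) hle
  have hsum : ∀ x, ∑ k ∈ S, (f (update v i x k)).toAdd.natAbs =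
      (f x).toAdd.natAbs + ∑ k ∈ S \ {i}, (f (v k)).toAdd.natAbs := fun x ↦ by
    rw [← Finset.sum_update_of_mem hi]
    congr 1 with k
    by_cases hk : k = i <;> simp [hk]
  refine ⟨_, .update_mul_zpow v hi hj hij m, ?_⟩
  rw [hsum, ← update_eq_self i v, hsum, update_eq_self]
  simpa [mul_comm] using hm

theorem exists_nielsenEquivOn_forall_ne_map_eq_one {S : Finset ι} {i₀ : ι} (hi₀ : i₀ ∈ S)
    (v : ι → G) : ∃ w, NielsenEquivOn S v w ∧ ∀ i ∈ S, i ≠ i₀ → f (w i) = 1 := by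
  induction hM : ∑ k ∈ S, (f (v k)).toAdd.natAbs using Nat.strong_induction_on generalizing v
    with | _ M ih =>
  by_cases hpair : ∃ i ∈ S, ∃ j ∈ S, i ≠ j ∧ f (v i) ≠ 1 ∧ f (v j) ≠ 1
  · obtain ⟨i, hi, j, hj, hij, hvi, hvj⟩ := hpair
    obtain ⟨w, hvw, hlt⟩ := exists_nielsenEquivOn_sum_natAbs_lt f hi hj hij hvi hvj
    obtain ⟨u, hwu, hu⟩ := ih _ (hM ▸ hlt) w rfl
    exact ⟨u, hvw.trans hwu, hu⟩
  push Not at hpair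
  -- at most one generator in `S` has a nontrivial `f`-value; swap it into position `i₀`
  by_cases hv : ∃ i ∈ S, i ≠ i₀ ∧ f (v i) ≠ 1
  · obtain ⟨i, hi, hii₀, hvi⟩ := hv
    refine ⟨_, .comp_swap v hi hi₀, fun k hk hki₀ ↦ ?_⟩
    rcases eq_or_ne k i with rfl | hki
    · simpa using hpair k hk i₀ hi₀ hii₀ hvi
    · simpa [Equiv.swap_apply_of_ne_of_ne hki hki₀] using hpair i hi k hk hki.symm hvi
  · push Not at hv
    exact ⟨v, .refl v, hv⟩

end Euclid

section MulSinglePair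

variable [DecidableEq ι] {i₀ i₁ : ι}

def mulSinglePair (i₀ i₁ : ι) (x y : G) : ι → G := Pi.mulSingle i₀ x * Pi.mulSingle i₁ y

theorem mulSinglePair_apply (x y : G) (i : ι) :
    mulSinglePair i₀ i₁ x y i = (if i = i₀ then x else 1) * (if i = i₁ then y else 1) := by
  simp [mulSinglePair, Pi.mulSingle_apply]

theorem update_mulSinglePair_left (h : i₀ ≠ i₁) (x y x' : G) :
    update (mulSinglePair i₀ i₁ x y) i₀ x' = mulSinglePair i₀ i₁ x' y := by
  funext k
  by_cases hk : k = i₀ <;> simp [hk, h, mulSinglePair_apply]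

theorem update_mulSinglePair_right (h : i₀ ≠ i₁) (x y y' : G) :
    update (mulSinglePair i₀ i₁ x y) i₁ y' = mulSinglePair i₀ i₁ x y' := by
  funext k
  by_cases hk : k = i₁ <;> simp [hk, h.symm, mulSinglePair_apply]

namespace NielsenEquiv

theorem mulSinglePair_zpow_units_left (h : i₀ ≠ i₁) (x y : G) (u : ℤˣ) :
    NielsenEquiv (mulSinglePair i₀ i₁ x y) (mulSinglePair i₀ i₁ (x ^ (u : ℤ)) y) := by
  simpa [update_mulSinglePair_left h, mulSinglePair_apply, h]
    using update_zpow_units (mulSinglePair i₀ i₁ x y) i₀ u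

theorem mulSinglePair_zpow_units_right (h : i₀ ≠ i₁) (x y : G) (u : ℤˣ) :
    NielsenEquiv (mulSinglePair i₀ i₁ x y) (mulSinglePair i₀ i₁ x (y ^ (u : ℤ))) := by
  simpa [update_mulSinglePair_right h, mulSinglePair_apply, h.symm]
    using update_zpow_units (mulSinglePair i₀ i₁ x y) i₁ u

theorem mulSinglePair_mul_zpow_left (h : i₀ ≠ i₁) (x y : G) (m : ℤ) :
    NielsenEquiv (mulSinglePair i₀ i₁ x y) (mulSinglePair i₀ i₁ (x * y ^ m) y) := by
  simpa [update_mulSinglePair_left h, mulSinglePair_apply, h, h.symm]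
    using update_mul_zpow (mulSinglePair i₀ i₁ x y) h m

end NielsenEquiv

end MulSinglePair

section IntProd

variable [Fintype ι] [DecidableEq ι] {i₀ i₁ : ι}

theorem exists_nielsenEquiv_mulSinglePair (h : i₀ ≠ i₁) (v : ι → Multiplicative (ℤ × ℤ)) :
    ∃ x y : Multiplicative (ℤ × ℤ), y.toAdd.1 = 0 ∧ NielsenEquiv v (mulSinglePair i₀ i₁ x y) := by
  obtain ⟨w₁, hvw₁, hw₁⟩ := exists_nielsenEquivOn_forall_ne_map_eq_one
    (AddMonoidHom.fst ℤ ℤ).toMultiplicative (Finset.mem_univ i₀) v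
  have hi₁ : i₁ ∈ Finset.univ.erase i₀ := Finset.mem_erase.mpr ⟨h.symm, Finset.mem_univ _⟩
  obtain ⟨w₂, hw₁w₂, hw₂⟩ := exists_nielsenEquivOn_forall_ne_map_eq_one
    (AddMonoidHom.snd ℤ ℤ).toMultiplicative hi₁ w₁
  have hfst := hw₁w₂.mapsTo (AddMonoidHom.fst ℤ ℤ).toMultiplicative.ker
    fun i hi ↦ hw₁ i (Finset.mem_univ i) (Finset.ne_of_mem_erase hi)
  refine ⟨w₂ i₀, w₂ i₁, toAdd_eq_zero.mpr (hfst hi₁), hvw₁.nielsenEquiv.trans ?_⟩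
  convert hw₁w₂.nielsenEquiv using 1
  funext i
  rcases eq_or_ne i i₀ with rfl | hi₀
  · simp [mulSinglePair_apply, h]
  rcases eq_or_ne i i₁ with rfl | hi₁
  · simp [mulSinglePair_apply, h.symm]
  have hi : i ∈ Finset.univ.erase i₀ := by simpa using hi₀
  have hw₂i : (w₂ i).toAdd = 0 :=
    Prod.ext (toAdd_eq_zero.mpr (hfst hi)) (toAdd_eq_zero.mpr (hw₂ i hi hi₁))
  simp [mulSinglePair_apply, hi₀, hi₁, toAdd_eq_zero.mp hw₂i]

theorem nielsenEquiv_mulSinglePair_of_surjective (h : i₀ ≠ i₁) {v : ι → Multiplicative (ℤ × ℤ)}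
    (hv : Surjective (lift v)) :
    NielsenEquiv v (mulSinglePair i₀ i₁ (.ofAdd (1, 0)) (.ofAdd (0, 1))) := by
  obtain ⟨x, y, hy, hvxy⟩ := exists_nielsenEquiv_mulSinglePair h v
  obtain ⟨a, ha⟩ : IsUnit x.toAdd.1 := by
    simpa [mulSinglePair_apply, h] using isUnit_toAdd_of_surjective_lift (hvxy.surjective_lift hv)
      (f := (AddMonoidHom.fst ℤ ℤ).toMultiplicative) (fun t ↦ ⟨.ofAdd (t.toAdd, 0), rfl⟩)
      (i₀ := i₀) fun i hi ↦ by
        rw [mulSinglePair_apply, if_neg hi, one_mul]; split_ifs <;> simp [hy]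
  obtain ⟨x', hx'₁, hvx'⟩ : ∃ x' : Multiplicative (ℤ × ℤ),
      x'.toAdd.1 = 1 ∧ NielsenEquiv v (mulSinglePair i₀ i₁ x' y) :=
    ⟨x ^ (a : ℤ), by simp [← ha], hvxy.trans (.mulSinglePair_zpow_units_left h x y a)⟩
  obtain ⟨c, hc⟩ : IsUnit y.toAdd.2 := by
    simpa [mulSinglePair_apply, h.symm, hy] using isUnit_toAdd_of_surjective_lift
      (hvx'.surjective_lift hv)
      (f := (AddMonoidHom.snd ℤ ℤ - x'.toAdd.2 • AddMonoidHom.fst ℤ ℤ).toMultiplicative)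
      (fun t ↦ ⟨.ofAdd (0, t.toAdd), by simp⟩)
      (i₀ := i₁) fun i hi ↦ by
        rw [mulSinglePair_apply, if_neg hi, mul_one]; split_ifs <;> simp [hx'₁]
  have hvx'y' : NielsenEquiv v (mulSinglePair i₀ i₁ x' (.ofAdd (0, 1))) := by
    convert hvx'.trans (.mulSinglePair_zpow_units_right h x' y c) using 2
    apply Multiplicative.toAdd.injective
    simp [Prod.ext_iff, hy, ← hc]
  convert hvx'y'.trans (.mulSinglePair_mul_zpow_left h x' (.ofAdd (0, 1)) (-x'.toAdd.2)) using 2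
  apply Multiplicative.toAdd.injective
  simp [Prod.ext_iff, hx'₁]

end IntProd

theorem two_le_card_of_surjective_lift [Fintype ι] {v : ι → Multiplicative (ℤ × ℤ)}
    (hv : Surjective (lift v)) : 2 ≤ Fintype.card ι := by
  have hclosure : AddSubgroup.closure (range (Multiplicative.toAdd ∘ v)) = ⊤ := by
    apply AddSubgroup.toSubgroup.injective
    rw [AddSubgroup.toSubgroup_closure, range_comp, Equiv.preimage_image, ← range_lift_eq_closure]
    simpa using MonoidHom.range_eq_top.mpr hv
  have hspan : Submodule.span ℤ (range (Multiplicative.toAdd ∘ v)) = ⊤ := by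
    rw [← Submodule.toAddSubgroup_inj, Submodule.span_int_eq_addSubgroupClosure, hclosure]
    rfl
  calc 2 = Module.finrank ℤ (ℤ × ℤ) := by simp
    _ = (range (Multiplicative.toAdd ∘ v)).finrank ℤ := by rw [Set.finrank, hspan, finrank_top]
    _ ≤ Fintype.card ι := finrank_range_le_card _

theorem aut_transitive_on_epis_torus_group (n : ℕ)
    (φ ψ : FreeGroup (Fin n) →* Multiplicative (ℤ × ℤ))
    (hφ : Function.Surjective φ) (hψ : Function.Surjective ψ) :
    ∃ α : FreeGroup (Fin n) ≃* FreeGroup (Fin n),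
      ψ.comp α.toMonoidHom = φ := by
  have hφ' : Surjective (lift (lift.symm φ)) := by rwa [Equiv.apply_symm_apply]
  have hψ' : Surjective (lift (lift.symm ψ)) := by rwa [Equiv.apply_symm_apply]
  have hn : 2 ≤ n := by simpa using two_le_card_of_surjective_lift hφ'
  have h01 : (⟨0, by omega⟩ : Fin n) ≠ ⟨1, by omega⟩ := by simp
  obtain ⟨α, hα⟩ := (nielsenEquiv_mulSinglePair_of_surjective h01 hψ').trans
    (nielsenEquiv_mulSinglePair_of_surjective h01 hφ').symm
  exact ⟨α, by simpa using hα⟩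
end

section
/- Let n be a natural number and let K be the Klein bottle group, the presented group on two generators x_0, x_1 with single relator x_0² x_1². For any two surjective group homomorphisms φ, ψ : F_n →* K there exists an automorphism α of F_n with ψ ∘ α = φ. -/
/-- The single relator `x_0² x_1² ⋯ x_{k-1}²` of the nonorientable genus-`k`
surface group, as an element of the free group on `Fin k`. -/
def nonorientableRelator (k : ℕ) : FreeGroup (Fin k) :=
  ((List.finRange k).map (fun i => (FreeGroup.of i) ^ 2)).prod

/-- The nonorientable genus-`k` surface group. -/
def NonorientableSurfaceGroup (k : ℕ) : Type :=
  PresentedGroup ({nonorientableRelator k} : Set (FreeGroup (Fin k)))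

instance (k : ℕ) : Group (NonorientableSurfaceGroup k) :=
  inferInstanceAs (Group (PresentedGroup _))

/-- The standard epimorphism `ρ_k : F_k →* N_k`, the quotient map of the presentation. -/
def standardRho (k : ℕ) : FreeGroup (Fin k) →* NonorientableSurfaceGroup k :=
  PresentedGroup.mk _

/-- The Klein bottle group: the presented group on two generators `x_0, x_1` with
single relator `x_0² x_1²`, i.e. the nonorientable genus-2 surface group. -/
def KleinBottleGroup : Type := NonorientableSurfaceGroup 2

instance : Group KleinBottleGroup :=
  inferInstanceAs (Group (NonorientableSurfaceGroup 2))

/-!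
Write `t = x₀` and `a = x₀ x₁`, so that the Klein bottle group is `⟨t, a | t a t⁻¹ = a⁻¹⟩`:
every element is `t ^ m * a ^ k`, with `m` read off by the degree map `x₀ ↦ 1, x₁ ↦ -1` to `ℤ`.
It suffices to bring every generating tuple by Nielsen moves to `(t, a, 1, …, 1)` up to the
order of its entries. The Euclidean algorithm on the degrees leaves a single entry of nonzero
degree; as the tuple generates, this degree divides `deg t = 1`, so after an inversion the entry
is `t a ^ x`, and all other entries lie in `⟨a⟩`. The Euclidean algorithm on their exponents
leaves a single `a ^ y`. In `DihedralGroup |y|` the whole tuple then maps into `{1, sr x}`,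
which misses the image `r 1` of `a` unless `y = ±1`. A last transvection turns `t a ^ x` into `t`.
-/

open Function

lemma Int.natAbs_emod_lt (a : ℤ) {b : ℤ} (hb : b ≠ 0) : (a % b).natAbs < b.natAbs := by
  have := Int.emod_lt a hb
  have := Int.emod_nonneg a hb
  omega

theorem exists_support_subsingleton_of_transvection_closed {ι : Type*} [DecidableEq ι]
    (s : Finset ι) (P : (ι → ℤ) → Prop)
    (hP : ∀ v, P v → ∀ i ∈ s, ∀ j ∈ s, i ≠ j → ∀ c : ℤ, P (update v i (v i + c * v j)))
    (v : ι → ℤ) (hv : P v) : ∃ v', P v' ∧ {i | i ∈ s ∧ v' i ≠ 0}.Subsingleton := by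
  induction hM : ∑ i ∈ s, (v i).natAbs using Nat.strong_induction_on generalizing v with
  | _ M ih =>
  by_cases h : ∃ i ∈ s, ∃ j ∈ s, i ≠ j ∧ v j ≠ 0 ∧ (v j).natAbs ≤ (v i).natAbs
  · obtain ⟨i, hi, j, hj, hij, hvj, hle⟩ := h
    have hv' : update v i (v i + -(v i / v j) * v j) = update v i (v i % v j) := by
      rw [Int.emod_def]; ring_nf
    refine ih _ ?_ _ (hv' ▸ hP v hv i hi j hj hij _) rfl
    rw [← hM]
    refine Finset.sum_lt_sum (fun k _ => ?_) ⟨i, hi, ?_⟩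
    · rcases eq_or_ne k i with rfl | hk
      · simpa using (Int.natAbs_emod_lt _ hvj).le.trans hle
      · simp [hk]
    · simpa using (Int.natAbs_emod_lt _ hvj).trans_le hle
  · refine ⟨v, hv, fun i ⟨hi, hvi⟩ j ⟨hj, hvj⟩ => ?_⟩
    by_contra hij
    rcases le_total (v j).natAbs (v i).natAbs with hle | hle
    · exact h ⟨i, hi, j, hj, hij, hvj, hle⟩
    · exact h ⟨j, hj, i, hi, Ne.symm hij, hvi, hle⟩

open DihedralGroup in
lemma DihedralGroup.eq_one_of_r_one_mem_zpowers_sr {n : ℕ} {i : ZMod n}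
    (h : r 1 ∈ Subgroup.zpowers (sr i)) : n = 1 := by
  obtain ⟨k, hk⟩ := Subgroup.mem_zpowers_iff.1 h
  have hsq : sr i ^ (2 : ℤ) = 1 := by rw [zpow_two, sr_mul_self]
  rcases Int.even_or_odd' k with ⟨q, rfl | rfl⟩
  · rw [zpow_mul, hsq, one_zpow, one_def, r.injEq] at hk
    exact ZMod.one_eq_zero_iff.1 hk.symm
  · rw [zpow_add_one, zpow_mul, hsq, one_zpow, one_mul] at hk
    cases hk

variable {ι G : Type*} [Group G]

lemma FreeGroup.mem_of_lift_surjective {w : ι → G} (hw : Surjective (FreeGroup.lift w))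
    {S : Subgroup G} (hS : ∀ i, w i ∈ S) (g : G) : g ∈ S := by
  rw [FreeGroup.lift_surjective_iff_closure_range_eq_top] at hw
  exact (Subgroup.closure_le S).2 (Set.range_subset_iff.2 hS) (hw ▸ Subgroup.mem_top g)

def NielsenEquivalent (w w' : ι → G) : Prop :=
  ∃ α : FreeGroup ι ≃* FreeGroup ι, (FreeGroup.lift w).comp α.toMonoidHom = FreeGroup.lift w'

namespace NielsenEquivalent

lemma refl (w : ι → G) : NielsenEquivalent w w := ⟨MulEquiv.refl _, rfl⟩

lemma symm {w w' : ι → G} (h : NielsenEquivalent w w') : NielsenEquivalent w' w := by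
  obtain ⟨α, hα⟩ := h
  refine ⟨α.symm, ?_⟩
  rw [← hα]
  ext
  simp

lemma trans {w w' w'' : ι → G} (h : NielsenEquivalent w w') (h' : NielsenEquivalent w' w'') :
    NielsenEquivalent w w'' := by
  obtain ⟨α, hα⟩ := h
  obtain ⟨β, hβ⟩ := h'
  exact ⟨β.trans α, by rw [← hβ, ← hα]; rfl⟩

lemma lift_surjective {w w' : ι → G} (h : NielsenEquivalent w w')
    (hw : Surjective (FreeGroup.lift w)) : Surjective (FreeGroup.lift w') := by
  obtain ⟨α, hα⟩ := h
  rw [← hα, MonoidHom.coe_comp]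
  exact hw.comp α.surjective

lemma of_substitution {w w' : ι → G} (u v : ι → FreeGroup ι)
    (huv : ∀ i, FreeGroup.lift u (v i) = .of i) (hvu : ∀ i, FreeGroup.lift v (u i) = .of i)
    (hw : ∀ i, FreeGroup.lift w (u i) = w' i) : NielsenEquivalent w w' :=
  ⟨MonoidHom.toMulEquiv (FreeGroup.lift u) (FreeGroup.lift v) (by ext; simp [hvu])
    (by ext; simp [huv]), by ext; simp [MonoidHom.toMulEquiv, hw]⟩

lemma comp_perm (w : ι → G) (σ : Equiv.Perm ι) : NielsenEquivalent w (w ∘ σ) :=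
  ⟨FreeGroup.freeGroupCongr σ, by ext; simp⟩

variable [DecidableEq ι]

lemma update_mul_zpow (w : ι → G) {i j : ι} (hij : i ≠ j) (c : ℤ) :
    NielsenEquivalent w (update w i (w i * w j ^ c)) := by
  refine of_substitution (update .of i (.of i * .of j ^ c)) (update .of i (.of i * .of j ^ (-c)))
    ?_ ?_ ?_ <;>
  · intro k
    rcases eq_or_ne k i with rfl | hk <;> simp [*, hij.symm, mul_assoc]

lemma update_zpow_of_isUnit (w : ι → G) (i : ι) {ε : ℤ} (hε : IsUnit ε) :
    NielsenEquivalent w (update w i (w i ^ ε)) := by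
  refine of_substitution (update .of i (.of i ^ ε)) (update .of i (.of i ^ ε)) ?_ ?_ ?_ <;>
  · intro k
    rcases eq_or_ne k i with rfl | hk <;> simp [*, ← zpow_mul, Int.isUnit_mul_self hε]

lemma update_update_one (g h : G) {i₀ i₁ j₀ j₁ : ι} (hi : i₀ ≠ i₁) (hj : j₀ ≠ j₁) :
    NielsenEquivalent (update (update 1 i₁ h) i₀ g) (update (update 1 j₁ h) j₀ g) := by
  obtain ⟨σ, hσ⟩ := Equiv.Perm.exists_extending_pair ![j₀, j₁] ![i₀, i₁]
    (injective_pair_iff_ne.2 hj) (injective_pair_iff_ne.2 hi)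
  have h₀ : σ.symm i₀ = j₀ := σ.symm_apply_eq.2 (hσ 0).symm
  have h₁ : σ.symm i₁ = j₁ := σ.symm_apply_eq.2 (hσ 1).symm
  simpa [update_comp_equiv, h₀, h₁] using comp_perm (update (update 1 i₁ h) i₀ g) σ

end NielsenEquivalent

namespace KleinBottleGroup

open Multiplicative

def gen (i : Fin 2) : KleinBottleGroup := PresentedGroup.of i

lemma closure_range_gen : Subgroup.closure (Set.range gen) = ⊤ :=
  PresentedGroup.closure_range_of _

lemma nonorientableRelator_two :
    nonorientableRelator 2 = FreeGroup.of 0 ^ 2 * FreeGroup.of 1 ^ 2 := by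
  simp [nonorientableRelator, List.finRange_succ]

lemma gen_sq_mul_gen_sq : gen 0 ^ 2 * gen 1 ^ 2 = 1 := by
  have h := PresentedGroup.one_of_mem (rels := {nonorientableRelator 2})
    (by rw [Set.mem_singleton_iff, nonorientableRelator_two])
  rw [map_mul, map_pow, map_pow] at h
  exact h

section Lift

variable {H : Type*} [Group H]

def lift (g₀ g₁ : H) (h : g₀ ^ 2 * g₁ ^ 2 = 1) : KleinBottleGroup →* H :=
  PresentedGroup.toGroup (f := ![g₀, g₁]) <| by
    rintro r rfl
    simpa [nonorientableRelator_two] using h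

@[simp]
lemma lift_gen_zero (g₀ g₁ : H) (h : g₀ ^ 2 * g₁ ^ 2 = 1) : lift g₀ g₁ h (gen 0) = g₀ :=
  PresentedGroup.toGroup.of _

@[simp]
lemma lift_gen_one (g₀ g₁ : H) (h : g₀ ^ 2 * g₁ ^ 2 = 1) : lift g₀ g₁ h (gen 1) = g₁ :=
  PresentedGroup.toGroup.of _

end Lift

def t : KleinBottleGroup := gen 0

def a : KleinBottleGroup := gen 0 * gen 1

lemma gen_one : gen 1 = t⁻¹ * a :=
  (inv_mul_cancel_left _ _).symm

lemma conj_a : t * a * t⁻¹ = a⁻¹ := by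
  calc t * a * t⁻¹ = (gen 0 ^ 2 * gen 1 ^ 2) * a⁻¹ := by simp only [t, a, sq]; group
  _ = a⁻¹ := by rw [gen_sq_mul_gen_sq, one_mul]

lemma conj_zpow_a (k : ℤ) : t * a ^ k * t⁻¹ = a ^ (-k) := by
  rw [← conj_zpow, conj_a, inv_zpow, zpow_neg]

lemma zpow_a_mul_t (k : ℤ) : a ^ k * t = t * a ^ (-k) := by
  have h := conj_zpow_a (-k)
  rw [neg_neg] at h
  rw [← h]; group

lemma zpow_a_mul_t_inv (k : ℤ) : a ^ k * t⁻¹ = t⁻¹ * a ^ (-k) := by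
  rw [← conj_zpow_a]; group

lemma exists_eq_zpow_t_mul_zpow_a (g : KleinBottleGroup) : ∃ m k : ℤ, g = t ^ m * a ^ k := by
  have hg : g ∈ Subgroup.closure (Set.range gen) := closure_range_gen ▸ Subgroup.mem_top g
  induction hg using Subgroup.closure_induction_right with
  | one => exact ⟨0, 0, by simp⟩
  | mul_right x _ y hy ih =>
    obtain ⟨i, rfl⟩ := hy
    obtain ⟨m, k, rfl⟩ := ih
    fin_cases i
    · refine ⟨m + 1, -k, ?_⟩
      calc t ^ m * a ^ k * gen 0 = t ^ m * (a ^ k * t) := by rw [mul_assoc]; rfl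
      _ = _ := by rw [zpow_a_mul_t]; group
    · refine ⟨m - 1, -k + 1, ?_⟩
      calc t ^ m * a ^ k * gen 1 = t ^ m * (a ^ k * t⁻¹) * a := by rw [gen_one]; group
      _ = _ := by rw [zpow_a_mul_t_inv]; group
  | mul_inv_cancel x _ y hy ih =>
    obtain ⟨i, rfl⟩ := hy
    obtain ⟨m, k, rfl⟩ := ih
    fin_cases i
    · refine ⟨m - 1, -k, ?_⟩
      calc t ^ m * a ^ k * (gen 0)⁻¹ = t ^ m * (a ^ k * t⁻¹) := by rw [mul_assoc]; rfl
      _ = _ := by rw [zpow_a_mul_t_inv]; group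
    · refine ⟨m + 1, -k + 1, ?_⟩
      calc t ^ m * a ^ k * (gen 1)⁻¹ = t ^ m * (a ^ (k - 1) * t) := by rw [gen_one]; group
      _ = _ := by rw [zpow_a_mul_t]; group

def degree : KleinBottleGroup →* Multiplicative ℤ := lift (ofAdd 1) (ofAdd (-1)) rfl

lemma toAdd_degree_t : toAdd (degree t) = 1 := by simp [degree, t]

lemma toAdd_degree_a : toAdd (degree a) = 0 := by simp [degree, a]

lemma exists_eq_degree_mul (g : KleinBottleGroup) :
    ∃ k : ℤ, g = t ^ toAdd (degree g) * a ^ k := by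
  obtain ⟨m, k, rfl⟩ := exists_eq_zpow_t_mul_zpow_a g
  exact ⟨k, by simp [toAdd_degree_t, toAdd_degree_a]⟩

variable {ι : Type*}

lemma isUnit_of_forall_dvd_degree {w : ι → KleinBottleGroup} (hw : Surjective (FreeGroup.lift w))
    {d : ℤ} (hd : ∀ i, d ∣ toAdd (degree (w i))) : IsUnit d := by
  have ht : d ∣ toAdd (degree t) := Int.mem_zmultiples_iff.1 <|
    FreeGroup.mem_of_lift_surjective hw
      (S := (AddSubgroup.zmultiples d).toSubgroup.comap degree)
      (fun i => Int.mem_zmultiples_iff.2 (hd i)) t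
  rw [toAdd_degree_t] at ht
  exact isUnit_of_dvd_one ht

variable [DecidableEq ι]

section Dihedral

open DihedralGroup

def toDihedral (d : ℕ) : KleinBottleGroup →* DihedralGroup d :=
  lift (sr 0) (sr 1) (by simp [sq])

@[simp] lemma toDihedral_t (d : ℕ) : toDihedral d t = sr 0 := by simp [toDihedral, t]

@[simp] lemma toDihedral_a (d : ℕ) : toDihedral d a = r 1 := by simp [toDihedral, a]

lemma isUnit_of_forall_dvd_exponent {i₀ : ι} {x : ℤ} {y : ι → ℤ}
    (hw : Surjective (FreeGroup.lift (update (fun i => a ^ y i) i₀ (t * a ^ x))))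
    {d : ℤ} (hd : ∀ i ≠ i₀, d ∣ y i) : IsUnit d := by
  have hmem : ∀ i, toDihedral d.natAbs (update (fun i => a ^ y i) i₀ (t * a ^ x) i) ∈
      Subgroup.zpowers (sr x) := by
    intro i
    rcases eq_or_ne i i₀ with rfl | hi
    · simp [Subgroup.mem_zpowers]
    · have : ((y i : ℤ) : ZMod d.natAbs) = 0 :=
        (ZMod.intCast_zmod_eq_zero_iff_dvd _ _).2 (Int.natAbs_dvd.2 (hd i hi))
      simp [hi, r_zpow, this]
  have ha := FreeGroup.mem_of_lift_surjective hw
    (S := (Subgroup.zpowers _).comap (toDihedral _)) hmem a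
  rw [Subgroup.mem_comap, toDihedral_a] at ha
  exact Int.isUnit_iff_natAbs_eq.2 (eq_one_of_r_one_mem_zpowers_sr ha)

end Dihedral

variable [Fintype ι]

lemma exists_nielsenEquivalent_update_t_mul_zpow_a (w : ι → KleinBottleGroup)
    (hw : Surjective (FreeGroup.lift w)) :
    ∃ (i₀ : ι) (x : ℤ) (y : ι → ℤ),
      NielsenEquivalent w (update (fun i => a ^ y i) i₀ (t * a ^ x)) := by
  obtain ⟨v, ⟨w', hww', hv⟩, hsupp⟩ := exists_support_subsingleton_of_transvection_closed
    Finset.univ (fun v => ∃ w', NielsenEquivalent w w' ∧ ∀ i, toAdd (degree (w' i)) = v i)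
    (by
      rintro v ⟨w', hw', hv⟩ i - j - hij c
      refine ⟨_, hw'.trans (.update_mul_zpow w' hij c), fun k => ?_⟩
      rcases eq_or_ne k i with rfl | hk <;> simp [*])
    (fun i => toAdd (degree (w i))) ⟨w, .refl w, fun _ => rfl⟩
  have hw' := hww'.lift_surjective hw
  obtain ⟨i₀, hi₀⟩ : ∃ i₀, v i₀ ≠ 0 := by
    by_contra! h
    exact not_isUnit_zero (isUnit_of_forall_dvd_degree hw' fun i => by simp [hv, h])
  have hzero : ∀ i ≠ i₀, v i = 0 := fun i hi =>
    by_contra fun h => hi (hsupp ⟨Finset.mem_univ i, h⟩ ⟨Finset.mem_univ i₀, hi₀⟩)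
  have hunit : IsUnit (v i₀) := isUnit_of_forall_dvd_degree hw' fun i => by
    rcases eq_or_ne i i₀ with rfl | hi
    · simp [hv]
    · simp [hv, hzero i hi]
  set w'' := update w' i₀ (w' i₀ ^ v i₀)
  have hdeg : ∀ i, toAdd (degree (w'' i)) = if i = i₀ then 1 else 0 := fun i => by
    rcases eq_or_ne i i₀ with rfl | hi
    · simp [w'', hv, Int.isUnit_mul_self hunit]
    · simp [w'', hi, hv, hzero i hi]
  choose y hy using fun i => exists_eq_degree_mul (w'' i)
  refine ⟨i₀, y i₀, y, (hww'.trans (.update_zpow_of_isUnit w' i₀ hunit)).trans ?_⟩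
  convert NielsenEquivalent.refl w'' using 1
  funext i
  rcases eq_or_ne i i₀ with rfl | hi
  · rw [update_self, hy i, hdeg, if_pos rfl, zpow_one]
  · rw [update_of_ne hi, hy i, hdeg, if_neg hi, zpow_zero, one_mul]

lemma exists_nielsenEquivalent_t_a_of_update_t_mul_zpow_a {i₀ : ι} {x : ℤ} {y : ι → ℤ}
    (hw : Surjective (FreeGroup.lift (update (fun i => a ^ y i) i₀ (t * a ^ x)))) :
    ∃ i₁, i₀ ≠ i₁ ∧ NielsenEquivalent (update (fun i => a ^ y i) i₀ (t * a ^ x))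
      (update (update 1 i₁ a) i₀ t) := by
  obtain ⟨y', hyy', hsupp⟩ := exists_support_subsingleton_of_transvection_closed
    (Finset.univ.erase i₀) (fun y' => NielsenEquivalent (update (fun i => a ^ y i) i₀ (t * a ^ x))
      (update (fun i => a ^ y' i) i₀ (t * a ^ x)))
    (by
      intro y' h i hi j hj hij c
      refine h.trans ?_
      convert NielsenEquivalent.update_mul_zpow _ hij c using 1
      funext k
      rcases eq_or_ne k i with rfl | hk
      · simp [Finset.ne_of_mem_erase hi, Finset.ne_of_mem_erase hj, zpow_add, zpow_mul']
      · simp [update_apply, hk])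
    y (.refl _)
  have hw' := hyy'.lift_surjective hw
  obtain ⟨i₁, hi₁, hy₁⟩ : ∃ i₁, i₁ ≠ i₀ ∧ y' i₁ ≠ 0 := by
    by_contra! h
    exact not_isUnit_zero (isUnit_of_forall_dvd_exponent hw' fun i hi => by simp [h i hi])
  have hzero : ∀ i ≠ i₀, i ≠ i₁ → y' i = 0 := fun i hi hi' => by_contra fun h =>
    hi' (hsupp ⟨Finset.mem_erase.2 ⟨hi, Finset.mem_univ i⟩, h⟩
      ⟨Finset.mem_erase.2 ⟨hi₁, Finset.mem_univ i₁⟩, hy₁⟩)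
  have hunit : IsUnit (y' i₁) := isUnit_of_forall_dvd_exponent hw' fun i hi => by
    rcases eq_or_ne i i₁ with rfl | hi'
    · exact dvd_rfl
    · simp [hzero i hi hi']
  refine ⟨i₁, hi₁.symm, hyy'.trans <| (NielsenEquivalent.update_zpow_of_isUnit _ i₁ hunit).trans ?_⟩
  convert NielsenEquivalent.update_mul_zpow (update (update 1 i₁ a) i₀ (t * a ^ x)) hi₁.symm (-x)
    using 1
  · funext k
    rcases eq_or_ne k i₁ with rfl | hk₁
    · simp [hi₁, ← zpow_mul, Int.isUnit_mul_self hunit]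
    rcases eq_or_ne k i₀ with rfl | hk₀
    · simp [hk₁]
    · simp [hk₀, hk₁, hzero k hk₀ hk₁]
  · simp [hi₁]

lemma exists_nielsenEquivalent_t_a (w : ι → KleinBottleGroup)
    (hw : Surjective (FreeGroup.lift w)) :
    ∃ i₀ i₁, i₀ ≠ i₁ ∧ NielsenEquivalent w (update (update 1 i₁ a) i₀ t) := by
  obtain ⟨i₀, x, y, h⟩ := exists_nielsenEquivalent_update_t_mul_zpow_a w hw
  obtain ⟨i₁, hi, h'⟩ := exists_nielsenEquivalent_t_a_of_update_t_mul_zpow_a (h.lift_surjective hw)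
  exact ⟨i₀, i₁, hi, h.trans h'⟩

end KleinBottleGroup

theorem aut_transitive_on_epis_klein_bottle_group (n : ℕ)
    (φ ψ : FreeGroup (Fin n) →* KleinBottleGroup)
    (hφ : Function.Surjective φ) (hψ : Function.Surjective ψ) :
    ∃ α : FreeGroup (Fin n) ≃* FreeGroup (Fin n),
      ψ.comp α.toMonoidHom = φ := by
  rw [← FreeGroup.lift.apply_symm_apply φ] at hφ ⊢
  rw [← FreeGroup.lift.apply_symm_apply ψ] at hψ ⊢
  obtain ⟨i₀, i₁, hi, hφ'⟩ := KleinBottleGroup.exists_nielsenEquivalent_t_a _ hφ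
  obtain ⟨j₀, j₁, hj, hψ'⟩ := KleinBottleGroup.exists_nielsenEquivalent_t_a _ hψ
  exact hψ'.trans <| (NielsenEquivalent.update_update_one _ _ hj hi).trans hφ'.symm
end

section
/- Let g ≥ 1 and n < 2g. Then there is no surjective group homomorphism F_n →* Σ_g onto the orientable genus-g surface group; that is, the minimal number of generators of Σ_g is 2g. -/
/-!
Since the relator of `Σ_g` is a product of commutators, sending `x_i` to the `i`-th basis vector
defines an epimorphism `Σ_g →* ℤ^{2g}`. Composed with an epimorphism `F_n →* Σ_g`, it makes the
images of the `n` free generators span the free `ℤ`-module `ℤ^{2g}` of rank `2g`, so `2g ≤ n`.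
-/

open scoped commutatorElement

/-- The single relator `∏_{i=0}^{g-1} [x_{2i}, x_{2i+1}]` of the orientable genus-`g`
surface group, as an element of the free group on `Fin (2*g)`. -/
def orientableRelator (g : ℕ) : FreeGroup (Fin (2 * g)) :=
  ((List.finRange g).map (fun i =>
    ⁅FreeGroup.of (⟨2 * i.val, by have := i.isLt; omega⟩ : Fin (2 * g)),
     FreeGroup.of (⟨2 * i.val + 1, by have := i.isLt; omega⟩ : Fin (2 * g))⁆)).prod

/-- The orientable genus-`g` surface group. -/
def SurfaceGroup (g : ℕ) : Type :=
  PresentedGroup ({orientableRelator g} : Set (FreeGroup (Fin (2 * g))))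

instance (g : ℕ) : Group (SurfaceGroup g) :=
  inferInstanceAs (Group (PresentedGroup _))

/-- The standard epimorphism `π_g : F_{2g} →* Σ_g`, the quotient map of the presentation. -/
def standardPi (g : ℕ) : FreeGroup (Fin (2 * g)) →* SurfaceGroup g :=
  PresentedGroup.mk _

theorem FreeGroup.finrank_le_card_of_surjective {α M : Type*} [Fintype α] [AddCommGroup M]
    (φ : FreeGroup α →* Multiplicative M) (hφ : Function.Surjective φ) :
    Module.finrank ℤ M ≤ Fintype.card α := by
  let v : α → M := fun i => (φ (FreeGroup.of i)).toAdd
  have mem_span : ∀ w, (φ w).toAdd ∈ Submodule.span ℤ (Set.range v) := by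
    intro w
    induction w using FreeGroup.induction_on with
    | C1 => rw [_root_.map_one, toAdd_one]; exact zero_mem _
    | of x => exact Submodule.subset_span ⟨x, rfl⟩
    | inv_of x hx => rw [_root_.map_inv, toAdd_inv]; exact neg_mem hx
    | mul x y hx hy => rw [_root_.map_mul, toAdd_mul]; exact add_mem hx hy
  refine finrank_le_of_span_eq_top (v := v) (eq_top_iff.mpr fun a _ => ?_)
  obtain ⟨w, hw⟩ := hφ (Multiplicative.ofAdd a)
  simpa [hw] using mem_span w

theorem FreeGroup.lift_single_surjective (ι : Type*) [Fintype ι] [DecidableEq ι] :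
    Function.Surjective
      (FreeGroup.lift fun i : ι => Multiplicative.ofAdd (Pi.single i (1 : ℤ))) := by
  intro a
  have single_mem (i : ι) : Multiplicative.ofAdd (Pi.single i (1 : ℤ)) ∈
      (FreeGroup.lift fun i : ι => Multiplicative.ofAdd (Pi.single i (1 : ℤ))).range :=
    ⟨FreeGroup.of i, FreeGroup.lift_apply_of⟩
  have sum_singles : a = ∏ i, Multiplicative.ofAdd (Pi.single i (1 : ℤ)) ^ a.toAdd i := by
    conv_lhs => rw [← ofAdd_toAdd a, ← Finset.univ_sum_single a.toAdd]
    rw [ofAdd_sum]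
    refine Finset.prod_congr rfl fun i _ => ?_
    rw [← ofAdd_zsmul, ← Pi.single_smul', smul_eq_mul, mul_one]
  rw [sum_singles]
  exact Subgroup.prod_mem _ fun i _ => Subgroup.zpow_mem _ (single_mem i) _

theorem lift_orientableRelator {G : Type*} [CommGroup G] (g : ℕ) (f : Fin (2 * g) → G) :
    FreeGroup.lift f (orientableRelator g) = 1 := by
  rw [orientableRelator, map_list_prod]
  refine List.prod_eq_one fun x hx => ?_
  simp only [List.map_map, List.mem_map] at hx
  obtain ⟨i, -, rfl⟩ := hx
  rw [Function.comp_apply, map_commutatorElement]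
  exact commutatorElement_eq_one_iff_commute.mpr (Commute.all _ _)

namespace SurfaceGroup

def lift {G : Type*} [CommGroup G] (g : ℕ) (f : Fin (2 * g) → G) : SurfaceGroup g →* G :=
  PresentedGroup.toGroup (by rintro r rfl; exact lift_orientableRelator g f)

theorem lift_comp_standardPi {G : Type*} [CommGroup G] (g : ℕ) (f : Fin (2 * g) → G) :
    (lift g f).comp (standardPi g) = FreeGroup.lift f :=
  rfl

end SurfaceGroup

theorem no_epi_to_surface_group_of_rank_lt_general (g n : ℕ) (hn : n < 2 * g) :
    ¬ ∃ φ : FreeGroup (Fin n) →* SurfaceGroup g, Function.Surjective φ := by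
  rintro ⟨φ, hφ⟩
  let ψ := SurfaceGroup.lift g fun i => Multiplicative.ofAdd (Pi.single i (1 : ℤ))
  have hψ : Function.Surjective ψ := by
    refine Function.Surjective.of_comp (g := standardPi g) ?_
    rw [← MonoidHom.coe_comp, SurfaceGroup.lift_comp_standardPi]
    exact FreeGroup.lift_single_surjective _
  have rank_le := FreeGroup.finrank_le_card_of_surjective (ψ.comp φ) (hψ.comp hφ)
  rw [Module.finrank_fin_fun, Fintype.card_fin] at rank_le
  omega

theorem no_epi_to_surface_group_of_rank_lt (g n : ℕ) (hg : 1 ≤ g) (hn : n < 2 * g) :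
    ¬ ∃ φ : FreeGroup (Fin n) →* SurfaceGroup g, Function.Surjective φ :=
  no_epi_to_surface_group_of_rank_lt_general g n hn
end

section
/- Let k ≥ 1 and n < k. Then there is no surjective group homomorphism F_n →* N_k onto the nonorientable genus-k surface group; that is, the minimal number of generators of N_k is k. -/
namespace FreeGroup

variable {α R V : Type*} [Ring R] [AddCommGroup V] [Module R V]

theorem toAdd_mem_span_range_of (ψ : FreeGroup α →* Multiplicative V) (w : FreeGroup α) :
    (ψ w).toAdd ∈ Submodule.span R (Set.range fun i => (ψ (of i)).toAdd) := by
  induction w using FreeGroup.induction_on with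
  | C1 => simp
  | of i => exact Submodule.subset_span ⟨i, rfl⟩
  | inv_of i h => simpa using Submodule.neg_mem _ h
  | mul a b ha hb => simpa using Submodule.add_mem _ ha hb

theorem finrank_le_card_of_surjective_s16 [StrongRankCondition R] [Fintype α]
    (ψ : FreeGroup α →* Multiplicative V) (hψ : Function.Surjective ψ) :
    Module.finrank R V ≤ Fintype.card α := by
  refine finrank_le_of_span_eq_top (v := fun i => (ψ (of i)).toAdd)
    (Submodule.eq_top_iff'.2 fun v => ?_)
  obtain ⟨w, hw⟩ := hψ (Multiplicative.ofAdd v)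
  simpa [hw] using toAdd_mem_span_range_of (R := R) ψ w

end FreeGroup

theorem lift_nonorientableRelator_eq_one {G : Type*} [Group G] {k : ℕ} (f : Fin k → G)
    (hf : ∀ i, f i ^ 2 = 1) : FreeGroup.lift f (nonorientableRelator k) = 1 := by
  rw [nonorientableRelator, map_list_prod, List.map_map]
  exact List.prod_eq_one (by simp [hf])

namespace NonorientableSurfaceGroup

def toModTwo (k : ℕ) : NonorientableSurfaceGroup k →* Multiplicative (Fin k → ZMod 2) :=
  PresentedGroup.toGroup (f := fun i => Multiplicative.ofAdd (Pi.single i 1)) <| by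
    rintro r rfl
    refine lift_nonorientableRelator_eq_one _ fun i => ?_
    rw [← ofAdd_nsmul, ← Pi.single_smul, two_nsmul, CharTwo.add_self_eq_zero, Pi.single_zero]
    rfl

theorem toModTwo_of {k : ℕ} (i : Fin k) :
    toModTwo k (PresentedGroup.of i) = Multiplicative.ofAdd (Pi.single i 1) :=
  PresentedGroup.toGroup.of _

theorem toModTwo_surjective (k : ℕ) : Function.Surjective (toModTwo k) := by
  rw [← MonoidHom.range_eq_top, Subgroup.eq_top_iff']
  intro v
  have hsingle (i : Fin k) (a : ZMod 2) :
      Multiplicative.ofAdd (Pi.single i a) ∈ (toModTwo k).range := by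
    obtain rfl | rfl : a = 0 ∨ a = 1 := by revert a; decide
    · simp
    · exact ⟨_, toModTwo_of i⟩
  change Multiplicative.ofAdd v.toAdd ∈ _
  rw [← Finset.univ_sum_single v.toAdd, ofAdd_sum]
  exact Subgroup.prod_mem _ fun i _ => hsingle i _

end NonorientableSurfaceGroup

theorem no_epi_to_nonorientable_surface_group_of_rank_lt_general (k n : ℕ)
    (hn : n < k) :
    ¬ ∃ φ : FreeGroup (Fin n) →* NonorientableSurfaceGroup k, Function.Surjective φ := by
  rintro ⟨φ, hφ⟩
  have hrank := FreeGroup.finrank_le_card_of_surjective_s16 (R := ZMod 2)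
    ((NonorientableSurfaceGroup.toModTwo k).comp φ)
    ((NonorientableSurfaceGroup.toModTwo_surjective k).comp hφ)
  rw [Module.finrank_fin_fun, Fintype.card_fin] at hrank
  omega

theorem no_epi_to_nonorientable_surface_group_of_rank_lt (k n : ℕ)
    (hk : 1 ≤ k) (hn : n < k) :
    ¬ ∃ φ : FreeGroup (Fin n) →* NonorientableSurfaceGroup k, Function.Surjective φ :=
  no_epi_to_nonorientable_surface_group_of_rank_lt_general k n hn
end
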